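/- Let K be an imaginary quadratic field with ring of integers O_K, N > 1 an integer, and 𝔣 = NO_K. The map sending t ∈ (ℤ/Nℤ)^×/{±1} to the class of tO_K in I_K(𝔣)/P_{K,1}(𝔣) is a well-defined injective group homomorphism with image P_{K,ℤ}(𝔣)/P_{K,1}(𝔣). -/
import Mathlib


open NumberField
open scoped nonZeroDivisors

/-- The principal fractional ideal `αO_K` of a nonzero integral element `α`. -/
noncomputable def prinFrac (K : Type*) [Field K] [NumberField K] (a : 𝓞 K) :
    FractionalIdeal (𝓞 K)⁰ K :=
  FractionalIdeal.spanSingleton (𝓞 K)⁰ (algebraMap (𝓞 K) K a)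

/-- `I_K(𝔣)`: the group of fractional ideals of `K` prime to `𝔣`, realized as the
subgroup of the group of invertible fractional ideals generated by the integral
ideals prime to `𝔣`. -/
noncomputable def IK (K : Type*) [Field K] [NumberField K] (f : Ideal (𝓞 K)) :
    Subgroup (FractionalIdeal (𝓞 K)⁰ K)ˣ :=
  Subgroup.closure
    {u | ∃ I : Ideal (𝓞 K), IsCoprime I f ∧ (u : FractionalIdeal (𝓞 K)⁰ K) = I}

/-- `P_K(𝔣)`: the subgroup of principal fractional ideals prime to `𝔣`, generated by
the `αO_K` with `α ∈ O_K \\ {0}` and `αO_K` prime to `𝔣`. -/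
noncomputable def PK (K : Type*) [Field K] [NumberField K] (f : Ideal (𝓞 K)) :
    Subgroup (FractionalIdeal (𝓞 K)⁰ K)ˣ :=
  Subgroup.closure
    {u | ∃ a : 𝓞 K, a ≠ 0 ∧ IsCoprime (Ideal.span {a}) f ∧
      (u : FractionalIdeal (𝓞 K)⁰ K) = prinFrac K a}

/-- `P_{K,ℤ}(𝔣)` (for `𝔣 = NO_K`): generated by the `αO_K` prime to `𝔣` with
`α ≡ a (mod 𝔣)` for some integer `a` with `gcd(N, a) = 1`. -/
noncomputable def PKZ (K : Type*) [Field K] [NumberField K] (f : Ideal (𝓞 K)) (N : ℕ) :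
    Subgroup (FractionalIdeal (𝓞 K)⁰ K)ˣ :=
  Subgroup.closure
    {u | ∃ a : 𝓞 K, a ≠ 0 ∧ IsCoprime (Ideal.span {a}) f ∧
      (∃ n : ℤ, Int.gcd n N = 1 ∧ a - (n : 𝓞 K) ∈ f) ∧
      (u : FractionalIdeal (𝓞 K)⁰ K) = prinFrac K a}

/-- `P_{K,1}(𝔣)`: generated by the `αO_K` prime to `𝔣` with `α ≡ 1 (mod 𝔣)`. -/
noncomputable def PK1 (K : Type*) [Field K] [NumberField K] (f : Ideal (𝓞 K)) :
    Subgroup (FractionalIdeal (𝓞 K)⁰ K)ˣ :=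
  Subgroup.closure
    {u | ∃ a : 𝓞 K, a ≠ 0 ∧ IsCoprime (Ideal.span {a}) f ∧ a - 1 ∈ f ∧
      (u : FractionalIdeal (𝓞 K)⁰ K) = prinFrac K a}

/-- The ray class group `Cl(𝔣) = I_K(𝔣)/P_{K,1}(𝔣)`. -/
noncomputable abbrev rayClassGroup (K : Type*) [Field K] [NumberField K]
    (f : Ideal (𝓞 K)) :=
  IK K f ⧸ (PK1 K f).subgroupOf (IK K f)


section RCFAux

/-- In a commutative group, every element of the closure of a set containing 1 and
closed under multiplication is of the form `a * b⁻¹` with `a b` in the set. -/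
lemma RCF.mem_closure_structure {G : Type*} [CommGroup G] {S : Set G}
    (h1 : (1 : G) ∈ S) (hmul : ∀ a ∈ S, ∀ b ∈ S, a * b ∈ S) {x : G}
    (hx : x ∈ Subgroup.closure S) : ∃ a ∈ S, ∃ b ∈ S, x = a * b⁻¹ := by
  refine Subgroup.closure_induction (p := fun y _ => ∃ a ∈ S, ∃ b ∈ S, y = a * b⁻¹)
    ?_ ?_ ?_ ?_ hx
  · exact fun y hy => ⟨y, hy, 1, h1, by simp⟩
  · exact ⟨1, h1, 1, h1, by simp⟩
  · rintro y z _ _ ⟨a, ha, b, hb, rfl⟩ ⟨c, hc, d, hd, rfl⟩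
    exact ⟨a * c, hmul a ha c hc, b * d, hmul b hb d hd,
      by rw [mul_mul_mul_comm, ← mul_inv]⟩
  · rintro y _ ⟨a, ha, b, hb, rfl⟩
    exact ⟨b, hb, a, ha, by group⟩

variable {K : Type*} [Field K] [NumberField K]

lemma RCF.int_dvd_of_mem_span {N : ℕ} (hN : N ≠ 0) {m : ℤ}
    (h : ((m : 𝓞 K)) ∈ Ideal.span {(N : 𝓞 K)}) : (N : ℤ) ∣ m := by
  obtain ⟨x, hx⟩ := Ideal.mem_span_singleton.mp h
  have hN' : (N : K) ≠ 0 := Nat.cast_ne_zero.mpr hN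
  have hNQ : (N : ℚ) ≠ 0 := Nat.cast_ne_zero.mpr hN
  have hxK : (algebraMap (𝓞 K) K) x = algebraMap ℚ K ((m : ℚ) / (N : ℚ)) := by
    have h1 : (m : K) = (N : K) * (algebraMap (𝓞 K) K x) := by
      have := congrArg (algebraMap (𝓞 K) K) hx
      simpa using this
    have h3 : algebraMap ℚ K ((m : ℚ) / (N : ℚ)) = (m : K) / (N : K) := by
      rw [map_div₀]; norm_num
    rw [h3, eq_div_iff hN', h1]; ring
  have hint : IsIntegral ℤ ((m : ℚ) / (N : ℚ)) := by
    have h1 : IsIntegral ℤ ((algebraMap (𝓞 K) K) x) := RingOfIntegers.isIntegral_coe x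
    rw [hxK] at h1
    exact (isIntegral_algebraMap_iff (algebraMap ℚ K).injective).mp h1
  obtain ⟨y, hy⟩ := IsIntegrallyClosed.isIntegral_iff.mp hint
  refine ⟨y, ?_⟩
  have h5 : (m : ℚ) = (N : ℚ) * y := by
    rw [eq_div_iff hNQ] at hy
    simp only [eq_intCast] at hy
    rw [← hy]; ring
  exact_mod_cast h5

lemma RCF.prinFrac_mul (a b : 𝓞 K) :
    prinFrac K (a * b) = prinFrac K a * prinFrac K b := by
  simp [prinFrac, FractionalIdeal.spanSingleton_mul_spanSingleton]

lemma RCF.prinFrac_one : prinFrac K 1 = 1 := by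
  simp [prinFrac]

lemma RCF.prinFrac_eq_coeIdeal (a : 𝓞 K) :
    ((Ideal.span {a} : Ideal (𝓞 K)) : FractionalIdeal (𝓞 K)⁰ K) = prinFrac K a := by
  rw [prinFrac, FractionalIdeal.coeIdeal_span_singleton]

lemma RCF.prinFrac_neg_one : prinFrac K (-1) = 1 := by
  rw [← RCF.prinFrac_eq_coeIdeal,
    Ideal.span_singleton_eq_top.mpr (isUnit_one.neg), FractionalIdeal.coeIdeal_top]

noncomputable def RCF.pUnit (a : 𝓞 K) (ha : a ≠ 0) : (FractionalIdeal (𝓞 K)⁰ K)ˣ :=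
  Units.mkOfMulEqOne (prinFrac K a)
    (FractionalIdeal.spanSingleton (𝓞 K)⁰ (algebraMap (𝓞 K) K a)⁻¹) (by
      have h : algebraMap (𝓞 K) K a ≠ 0 := by
        simpa [RingOfIntegers.coe_eq_zero_iff] using ha
      rw [prinFrac, FractionalIdeal.spanSingleton_mul_spanSingleton,
        mul_inv_cancel₀ h, FractionalIdeal.spanSingleton_one])

@[simp] lemma RCF.pUnit_val (a : 𝓞 K) (ha : a ≠ 0) :
    ((RCF.pUnit a ha : (FractionalIdeal (𝓞 K)⁰ K)ˣ) : FractionalIdeal (𝓞 K)⁰ K)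
      = prinFrac K a := rfl

lemma RCF.assoc_of_prinFrac_eq {a b : 𝓞 K} (h : prinFrac K a = prinFrac K b) :
    Associated a b := by
  rw [← RCF.prinFrac_eq_coeIdeal, ← RCF.prinFrac_eq_coeIdeal] at h
  have h2 : (Ideal.span {a} : Ideal (𝓞 K)) = Ideal.span {b} :=
    FractionalIdeal.coeIdeal_injective h
  exact Ideal.span_singleton_eq_span_singleton.mp h2

lemma RCF.mem_IK {f : Ideal (𝓞 K)} {a : 𝓞 K}
    (hc : IsCoprime (Ideal.span {a}) f) {u : (FractionalIdeal (𝓞 K)⁰ K)ˣ}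
    (hv : (u : FractionalIdeal (𝓞 K)⁰ K) = prinFrac K a) : u ∈ IK K f :=
  Subgroup.subset_closure ⟨Ideal.span {a}, hc, by rw [hv, RCF.prinFrac_eq_coeIdeal]⟩

lemma RCF.coprime_of_sub_one_mem {f : Ideal (𝓞 K)} {a : 𝓞 K} (h : a - 1 ∈ f) :
    IsCoprime (Ideal.span {a}) f := by
  rw [Ideal.isCoprime_iff_exists]
  exact ⟨a, Ideal.mem_span_singleton_self a, 1 - a, by simpa using f.neg_mem h, by ring⟩

lemma RCF.ne_zero_of_sub_one_mem {f : Ideal (𝓞 K)} (hftop : (1 : 𝓞 K) ∉ f)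
    {a : 𝓞 K} (h : a - 1 ∈ f) : a ≠ 0 := by
  rintro rfl
  exact hftop (by simpa using f.neg_mem h)

lemma RCF.coprime_span_intCast {N : ℕ} {n : ℤ} (h : Int.gcd n N = 1) :
    IsCoprime (Ideal.span {((n : ℤ) : 𝓞 K)}) (Ideal.span {(N : 𝓞 K)}) := by
  rw [Ideal.isCoprime_span_singleton_iff]
  have h1 : IsCoprime (n : ℤ) (N : ℤ) := Int.isCoprime_iff_gcd_eq_one.mpr h
  have h2 := h1.map (Int.castRingHom (𝓞 K))
  simpa using h2

/-- The key congruence lemma: congruent generators give the same ray class. -/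
lemma RCF.class_eq_of_cong {f : Ideal (𝓞 K)} (hftop : (1 : 𝓞 K) ∉ f)
    {a b : 𝓞 K} (hcb : IsCoprime (Ideal.span {b}) f) (hab : a - b ∈ f)
    {ua ub : (FractionalIdeal (𝓞 K)⁰ K)ˣ}
    (hva : (ua : FractionalIdeal (𝓞 K)⁰ K) = prinFrac K a)
    (hvb : (ub : FractionalIdeal (𝓞 K)⁰ K) = prinFrac K b)
    (hua : ua ∈ IK K f) (hub : ub ∈ IK K f) :
    (QuotientGroup.mk (⟨ua, hua⟩ : IK K f) : rayClassGroup K f)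
      = QuotientGroup.mk ⟨ub, hub⟩ := by
  rw [QuotientGroup.eq, Subgroup.mem_subgroupOf]
  have hcoe : (((⟨ua, hua⟩ : IK K f)⁻¹ * ⟨ub, hub⟩ : IK K f)
      : (FractionalIdeal (𝓞 K)⁰ K)ˣ) = ua⁻¹ * ub := rfl
  rw [hcoe]
  obtain ⟨i, hi, j, hj, hij⟩ := Ideal.isCoprime_iff_exists.mp hcb
  obtain ⟨x, hxb⟩ := Ideal.mem_span_singleton'.mp hi
  have hbx1 : b * x - 1 ∈ f := by
    have : b * x - 1 = -j := by rw [← hij, mul_comm b x, hxb]; ring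
    rw [this]; exact f.neg_mem hj
  have hax1 : a * x - 1 ∈ f := by
    have h5 := f.add_mem (f.mul_mem_left x hab) hbx1
    rwa [show x * (a - b) + (b * x - 1) = a * x - 1 by ring] at h5
  have hax0 : a * x ≠ 0 := RCF.ne_zero_of_sub_one_mem hftop hax1
  have hbx0 : b * x ≠ 0 := RCF.ne_zero_of_sub_one_mem hftop hbx1
  have hx0 : x ≠ 0 := fun h => hax0 (by rw [h, mul_zero])
  have hg1 : RCF.pUnit (a * x) hax0 ∈ PK1 K f :=
    Subgroup.subset_closure ⟨a * x, hax0, RCF.coprime_of_sub_one_mem hax1, hax1, rfl⟩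
  have hg2 : RCF.pUnit (b * x) hbx0 ∈ PK1 K f :=
    Subgroup.subset_closure ⟨b * x, hbx0, RCF.coprime_of_sub_one_mem hbx1, hbx1, rfl⟩
  have key : ua⁻¹ * ub = (RCF.pUnit (a * x) hax0)⁻¹ * (RCF.pUnit (b * x) hbx0) := by
    have h1 : RCF.pUnit (a * x) hax0 * ub = ua * RCF.pUnit (b * x) hbx0 := by
      apply Units.ext
      rw [Units.val_mul, Units.val_mul, RCF.pUnit_val, RCF.pUnit_val, hva, hvb,
        RCF.prinFrac_mul, RCF.prinFrac_mul]
      ring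
    calc ua⁻¹ * ub
        = ub * ua⁻¹ := mul_comm _ _
      _ = (RCF.pUnit (a * x) hax0)⁻¹ * (RCF.pUnit (a * x) hax0 * ub) * ua⁻¹ := by group
      _ = (RCF.pUnit (a * x) hax0)⁻¹ * (RCF.pUnit (b * x) hbx0 * ua) * ua⁻¹ := by
          rw [h1, mul_comm ua]
      _ = (RCF.pUnit (a * x) hax0)⁻¹ * (RCF.pUnit (b * x) hbx0) := by group
  rw [key]
  exact mul_mem (inv_mem hg1) hg2

end RCFAux

/-- For `K` imaginary quadratic with `O_K^× = {±1}` (i.e. `K ≠ ℚ(√−1), ℚ(√−3)`),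
`N > 1` and `𝔣 = NO_K`, the map `(ℤ/Nℤ)^×/{±1} → Cl(𝔣)`, `t ↦ [tO_K]`, is a
well-defined injective group homomorphism with image `P_{K,ℤ}(𝔣)/P_{K,1}(𝔣)`. -/
theorem units_mod_to_rayClassGroup (K : Type*) [Field K] [NumberField K]
    (h2 : Module.finrank ℚ K = 2) (hneg : NumberField.discr K < 0)
    (hunits : ∀ u : (𝓞 K)ˣ, u = 1 ∨ u = -1)
    (N : ℕ) (hN : 1 < N) (f : Ideal (𝓞 K)) (hf : f = Ideal.span {(N : 𝓞 K)}) :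
    ∃ φ : ((ZMod N)ˣ ⧸ Subgroup.closure ({-1} : Set (ZMod N)ˣ)) →* rayClassGroup K f,
      (∀ (t : (ZMod N)ˣ) (u : (FractionalIdeal (𝓞 K)⁰ K)ˣ) (hu : u ∈ IK K f),
        (u : FractionalIdeal (𝓞 K)⁰ K) = prinFrac K (((t : ZMod N).val : 𝓞 K)) →
          φ (QuotientGroup.mk t) = QuotientGroup.mk (⟨u, hu⟩ : IK K f)) ∧
      Function.Injective φ ∧
      MonoidHom.range φ =
        Subgroup.map (QuotientGroup.mk' ((PK1 K f).subgroupOf (IK K f)))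
          ((PKZ K f N).subgroupOf (IK K f)) := by
  haveI : NeZero N := ⟨by omega⟩
  haveI : Fact (1 < N) := ⟨hN⟩
  have hN0 : N ≠ 0 := by omega
  -- membership criterion for integers
  have hmemf : ∀ m : ℤ, ((m : 𝓞 K)) ∈ f ↔ (N : ℤ) ∣ m := by
    intro m
    constructor
    · intro h; exact RCF.int_dvd_of_mem_span hN0 (by rwa [hf] at h)
    · intro h
      rw [hf, Ideal.mem_span_singleton]
      have h2 : (((N : ℤ) : 𝓞 K)) ∣ ((m : ℤ) : 𝓞 K) := map_dvd (Int.castRingHom (𝓞 K)) h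
      push_cast at h2
      exact h2
  have hftop : (1 : 𝓞 K) ∉ f := by
    intro h
    have h1 : (N : ℤ) ∣ (1 : ℤ) := (hmemf 1).mp (by push_cast; exact h)
    have h2 := Int.le_of_dvd one_pos h1
    omega
  have hsub : ∀ a b : ℤ, (N : ℤ) ∣ a - b → ((a : 𝓞 K)) - (b : 𝓞 K) ∈ f := by
    intro a b h
    have h1 := (hmemf (a - b)).mpr h
    push_cast at h1
    exact h1
  -- facts about values of units of ZMod N
  have hvalco : ∀ t : (ZMod N)ˣ, Nat.Coprime ((t : ZMod N).val) N :=
    fun t => ZMod.val_coe_unit_coprime t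
  have hvalne : ∀ t : (ZMod N)ˣ, (((t : ZMod N).val : 𝓞 K)) ≠ 0 := by
    intro t
    have h1 : (t : ZMod N).val ≠ 0 := by
      intro h0
      have h2 := hvalco t
      rw [h0] at h2
      simp only [Nat.Coprime, Nat.gcd_zero_left] at h2
      omega
    exact Nat.cast_ne_zero.mpr h1
  have hvalcop : ∀ t : (ZMod N)ˣ,
      IsCoprime (Ideal.span {(((t : ZMod N).val : 𝓞 K))}) f := by
    intro t
    rw [hf]
    have h1 := RCF.coprime_span_intCast (K := K) (N := N) (n := ((t : ZMod N).val : ℤ))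
      (by rw [Int.gcd_natCast_natCast]; exact hvalco t)
    have h2 : (((((t : ZMod N).val : ℤ)) : 𝓞 K)) = (((t : ZMod N).val : 𝓞 K)) := by
      push_cast; ring
    rwa [h2] at h1
  -- the basic units
  have hUIK : ∀ t : (ZMod N)ˣ,
      RCF.pUnit (((t : ZMod N).val : 𝓞 K)) (hvalne t) ∈ IK K f :=
    fun t => RCF.mem_IK (hvalcop t) (RCF.pUnit_val _ _)
  -- multiplicativity
  have hmul : ∀ s t : (ZMod N)ˣ,
      (QuotientGroup.mk (⟨RCF.pUnit _ (hvalne (s * t)), hUIK (s * t)⟩ : IK K f)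
        : rayClassGroup K f)
      = QuotientGroup.mk ⟨RCF.pUnit _ (hvalne s), hUIK s⟩
        * QuotientGroup.mk ⟨RCF.pUnit _ (hvalne t), hUIK t⟩ := by
    intro s t
    have hmod : ((s * t : (ZMod N)ˣ) : ZMod N).val
        = ((s : ZMod N).val * (t : ZMod N).val) % N := by
      rw [Units.val_mul, ZMod.val_mul]
    have hdvd : (N : ℤ) ∣ ((((s * t : (ZMod N)ˣ) : ZMod N).val : ℤ)
        - (((s : ZMod N).val * (t : ZMod N).val : ℕ) : ℤ)) := by
      rw [hmod]
      have h1 : N ∣ ((s : ZMod N).val * (t : ZMod N).val)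
          - ((s : ZMod N).val * (t : ZMod N).val) % N := Nat.dvd_sub_mod _
      have h2 := Int.natCast_dvd_natCast.mpr h1
      rw [Nat.cast_sub (Nat.mod_le _ _)] at h2
      exact dvd_sub_comm.mp h2
    have hb0 : ((((s : ZMod N).val * (t : ZMod N).val : ℕ)) : 𝓞 K) ≠ 0 := by
      push_cast
      exact mul_ne_zero (hvalne s) (hvalne t)
    have hcb : IsCoprime
        (Ideal.span {((((s : ZMod N).val * (t : ZMod N).val : ℕ)) : 𝓞 K)}) f := by
      rw [hf]
      have h1 := RCF.coprime_span_intCast (K := K) (N := N)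
        (n := (((s : ZMod N).val * (t : ZMod N).val : ℕ) : ℤ))
        (by rw [Int.gcd_natCast_natCast]; exact Nat.Coprime.mul (hvalco s) (hvalco t))
      have h2 : (((((s : ZMod N).val * (t : ZMod N).val : ℕ) : ℤ)) : 𝓞 K)
          = ((((s : ZMod N).val * (t : ZMod N).val : ℕ)) : 𝓞 K) := by push_cast; ring
      rwa [h2] at h1
    have hab : ((((s * t : (ZMod N)ˣ) : ZMod N).val : 𝓞 K))
        - ((((s : ZMod N).val * (t : ZMod N).val : ℕ)) : 𝓞 K) ∈ f := by
      have h1 := hsub _ _ hdvd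
      push_cast at h1 ⊢
      exact h1
    have step1 : (QuotientGroup.mk (⟨RCF.pUnit _ (hvalne (s * t)), hUIK (s * t)⟩ : IK K f)
        : rayClassGroup K f)
        = QuotientGroup.mk ⟨RCF.pUnit _ hb0, RCF.mem_IK hcb (RCF.pUnit_val _ _)⟩ :=
      RCF.class_eq_of_cong hftop hcb hab (RCF.pUnit_val _ _) (RCF.pUnit_val _ _) _ _
    rw [step1]
    have step2 : (⟨RCF.pUnit _ hb0, RCF.mem_IK hcb (RCF.pUnit_val _ _)⟩ : IK K f)
        = ⟨RCF.pUnit _ (hvalne s), hUIK s⟩ * ⟨RCF.pUnit _ (hvalne t), hUIK t⟩ := by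
      refine Subtype.ext (Units.ext ?_)
      show prinFrac K ((((s : ZMod N).val * (t : ZMod N).val : ℕ)) : 𝓞 K)
        = prinFrac K (((s : ZMod N).val : 𝓞 K)) * prinFrac K (((t : ZMod N).val : 𝓞 K))
      rw [← RCF.prinFrac_mul]
      norm_cast
    rw [step2]
    rfl
  -- bundle into a monoid hom
  obtain ⟨ψ, hψ⟩ : ∃ ψ : (ZMod N)ˣ →* rayClassGroup K f, ∀ t : (ZMod N)ˣ,
      ψ t = QuotientGroup.mk ⟨RCF.pUnit _ (hvalne t), hUIK t⟩ :=
    ⟨MonoidHom.mk' (fun t => QuotientGroup.mk ⟨RCF.pUnit _ (hvalne t), hUIK t⟩) hmul,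
      fun t => rfl⟩
  -- ψ kills -1
  have hpsineg : ψ (-1) = 1 := by
    rw [hψ]
    have hcb : IsCoprime (Ideal.span {(-1 : 𝓞 K)}) f := by
      rw [Ideal.isCoprime_iff_exists]
      exact ⟨1, Ideal.mem_span_singleton'.mpr ⟨-1, by ring⟩, 0, f.zero_mem, by ring⟩
    have hab : ((((-1 : (ZMod N)ˣ) : ZMod N).val : 𝓞 K)) - (-1 : 𝓞 K) ∈ f := by
      have h1 : ((((-1 : (ZMod N)ˣ) : ZMod N).val : ℤ) : ZMod N) = ((-1 : ℤ) : ZMod N) := by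
        rw [Int.cast_natCast, ZMod.natCast_val, ZMod.cast_id]
        push_cast
        ring
      have h2 := (ZMod.intCast_eq_intCast_iff _ _ _).mp h1
      have h3 := Int.ModEq.dvd h2.symm
      have h4 := hsub _ _ h3
      push_cast at h4 ⊢
      exact h4
    have h5 : (QuotientGroup.mk (⟨RCF.pUnit _ (hvalne (-1)), hUIK (-1)⟩ : IK K f)
        : rayClassGroup K f) = QuotientGroup.mk ⟨1, one_mem _⟩ :=
      RCF.class_eq_of_cong hftop hcb hab (RCF.pUnit_val _ _)
        (by rw [Units.val_one, RCF.prinFrac_neg_one]) _ _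
    rw [h5]
    rfl
  -- kernel contains the closure of {-1}
  have hker : Subgroup.closure ({-1} : Set (ZMod N)ˣ) ≤ ψ.ker := by
    rw [Subgroup.closure_le]
    intro y hy
    rw [Set.mem_singleton_iff] at hy
    subst hy
    exact hpsineg
  refine ⟨QuotientGroup.lift _ ψ hker, ?_, ?_, ?_⟩
  · -- compatibility
    intro t u hu hval
    rw [QuotientGroup.lift_mk', hψ]
    exact congrArg _ (Subtype.ext (Units.ext (by rw [RCF.pUnit_val]; exact hval.symm)))
  · -- injectivity
    -- structure of PK1
    have h1S : (1 : (FractionalIdeal (𝓞 K)⁰ K)ˣ) ∈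
        {u : (FractionalIdeal (𝓞 K)⁰ K)ˣ | ∃ a : 𝓞 K, a ≠ 0 ∧
          IsCoprime (Ideal.span {a}) f ∧ a - 1 ∈ f ∧
          (u : FractionalIdeal (𝓞 K)⁰ K) = prinFrac K a} :=
      ⟨1, one_ne_zero, RCF.coprime_of_sub_one_mem (by simp), by simp,
        by rw [Units.val_one, RCF.prinFrac_one]⟩
    have hmulS : ∀ x ∈ {u : (FractionalIdeal (𝓞 K)⁰ K)ˣ | ∃ a : 𝓞 K, a ≠ 0 ∧
          IsCoprime (Ideal.span {a}) f ∧ a - 1 ∈ f ∧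
          (u : FractionalIdeal (𝓞 K)⁰ K) = prinFrac K a},
        ∀ y ∈ {u : (FractionalIdeal (𝓞 K)⁰ K)ˣ | ∃ a : 𝓞 K, a ≠ 0 ∧
          IsCoprime (Ideal.span {a}) f ∧ a - 1 ∈ f ∧
          (u : FractionalIdeal (𝓞 K)⁰ K) = prinFrac K a},
        x * y ∈ {u : (FractionalIdeal (𝓞 K)⁰ K)ˣ | ∃ a : 𝓞 K, a ≠ 0 ∧
          IsCoprime (Ideal.span {a}) f ∧ a - 1 ∈ f ∧
          (u : FractionalIdeal (𝓞 K)⁰ K) = prinFrac K a} := by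
      rintro x ⟨a, ha0, hca, ha1, hva⟩ y ⟨b, hb0, hcb, hb1, hvb⟩
      have hab1 : a * b - 1 ∈ f := by
        have h5 := f.add_mem (f.mul_mem_left a hb1) ha1
        rwa [show a * (b - 1) + (a - 1) = a * b - 1 by ring] at h5
      exact ⟨a * b, mul_ne_zero ha0 hb0, RCF.coprime_of_sub_one_mem hab1, hab1,
        by rw [Units.val_mul, hva, hvb, RCF.prinFrac_mul]⟩
    have hkerrev : ∀ r : (ZMod N)ˣ, ψ r = 1 →
        r ∈ Subgroup.closure ({-1} : Set (ZMod N)ˣ) := by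
      intro r hr
      rw [hψ r, QuotientGroup.eq_one_iff, Subgroup.mem_subgroupOf] at hr
      unfold PK1 at hr
      obtain ⟨g, hgS, h, hhS, hueq⟩ := RCF.mem_closure_structure h1S hmulS hr
      obtain ⟨α, hα0, hcα, hα1, hvg⟩ := hgS
      obtain ⟨β, hβ0, hcβ, hβ1, hvh⟩ := hhS
      have hueq' : RCF.pUnit (((r : ZMod N).val : 𝓞 K)) (hvalne r) = g * h⁻¹ := hueq
      have hgh : RCF.pUnit (((r : ZMod N).val : 𝓞 K)) (hvalne r) * h = g := by
        rw [hueq']; group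
      have hval : prinFrac K ((((r : ZMod N).val : 𝓞 K)) * β) = prinFrac K α := by
        have hc := congrArg Units.val hgh
        rw [Units.val_mul, RCF.pUnit_val, hvh, hvg, ← RCF.prinFrac_mul] at hc
        exact hc
      obtain ⟨ε, hε⟩ := RCF.assoc_of_prinFrac_eq hval
      have hrval : ∀ c : ℤ, (N : ℤ) ∣ (((r : ZMod N).val : ℤ) - c) →
          ((r : ZMod N) : ZMod N) = ((c : ℤ) : ZMod N) := by
        intro c hc
        have h1 : ((((r : ZMod N).val : ℤ)) : ZMod N) = ((c : ℤ) : ZMod N) :=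
          (ZMod.intCast_eq_intCast_iff _ _ _).mpr
            (Int.modEq_iff_dvd.mpr (dvd_sub_comm.mp hc))
        rw [Int.cast_natCast, ZMod.natCast_val, ZMod.cast_id] at h1
        exact h1
      rcases hunits ε with h1 | h1
      · -- ε = 1 : α = val * β, so val ≡ 1 mod f; r = 1
        have hε' : (((r : ZMod N).val : 𝓞 K)) * β = α := by
          rw [h1] at hε; simpa using hε
        have hm : (((r : ZMod N).val : 𝓞 K)) - 1 ∈ f := by
          have h5 := f.add_mem
            (f.neg_mem (f.mul_mem_left (((r : ZMod N).val : 𝓞 K)) hβ1)) hα1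
          rwa [show -((((r : ZMod N).val : 𝓞 K)) * (β - 1)) + (α - 1)
            = (((r : ZMod N).val : 𝓞 K)) - 1 by rw [← hε']; ring] at h5
        have h6 : (N : ℤ) ∣ (((r : ZMod N).val : ℤ) - 1) := by
          apply (hmemf _).mp
          push_cast
          exact hm
        have h7 : (r : ZMod N) = 1 := by
          have := hrval 1 h6
          push_cast at this
          exact this
        have h8 : r = 1 := Units.ext h7
        rw [h8]
        exact one_mem _
      · -- ε = -1 : val * β = -α, so val ≡ -1 mod f; r = -1
        have hε' : (((r : ZMod N).val : 𝓞 K)) * β = -α := by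
          rw [h1] at hε
          have h2 : -((((r : ZMod N).val : 𝓞 K)) * β) = α := by
            rw [← hε]; simp
          rw [← h2, neg_neg]
        have hz : (((r : ZMod N).val : 𝓞 K)) * β + α ∈ f := by
          rw [show (((r : ZMod N).val : 𝓞 K)) * β + α = 0 by rw [hε']; ring]
          exact f.zero_mem
        have hm : (((r : ZMod N).val : 𝓞 K)) - (-1) ∈ f := by
          have h5 := f.add_mem (f.add_mem
            (f.neg_mem (f.mul_mem_left (((r : ZMod N).val : 𝓞 K)) hβ1))
            (f.neg_mem hα1)) hz
          rwa [show -((((r : ZMod N).val : 𝓞 K)) * (β - 1)) + -(α - 1)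
            + ((((r : ZMod N).val : 𝓞 K)) * β + α)
            = (((r : ZMod N).val : 𝓞 K)) - (-1) by ring] at h5
        have h6 : (N : ℤ) ∣ (((r : ZMod N).val : ℤ) - (-1)) := by
          apply (hmemf _).mp
          push_cast
          push_cast at hm
          exact hm
        have h7 : (r : ZMod N) = -1 := by
          have := hrval (-1) h6
          push_cast at this
          exact this
        have h8 : r = -1 := Units.ext (by rw [h7]; rfl)
        rw [h8]
        exact Subgroup.subset_closure rfl
    intro x y hxy
    obtain ⟨s, rfl⟩ := QuotientGroup.mk_surjective x
    obtain ⟨t, rfl⟩ := QuotientGroup.mk_surjective y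
    rw [QuotientGroup.lift_mk', QuotientGroup.lift_mk'] at hxy
    rw [QuotientGroup.eq]
    apply hkerrev
    rw [map_mul, map_inv, hxy, inv_mul_cancel]
  · -- range identification
    -- structure of the PKZ generating set
    have h1SZ : (1 : (FractionalIdeal (𝓞 K)⁰ K)ˣ) ∈
        {u : (FractionalIdeal (𝓞 K)⁰ K)ˣ | ∃ a : 𝓞 K, a ≠ 0 ∧
          IsCoprime (Ideal.span {a}) f ∧
          (∃ n : ℤ, Int.gcd n N = 1 ∧ a - (n : 𝓞 K) ∈ f) ∧
          (u : FractionalIdeal (𝓞 K)⁰ K) = prinFrac K a} :=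
      ⟨1, one_ne_zero, RCF.coprime_of_sub_one_mem (by simp),
        ⟨1, Int.one_gcd, by push_cast; simp⟩,
        by rw [Units.val_one, RCF.prinFrac_one]⟩
    have hmulSZ : ∀ x ∈ {u : (FractionalIdeal (𝓞 K)⁰ K)ˣ | ∃ a : 𝓞 K, a ≠ 0 ∧
          IsCoprime (Ideal.span {a}) f ∧
          (∃ n : ℤ, Int.gcd n N = 1 ∧ a - (n : 𝓞 K) ∈ f) ∧
          (u : FractionalIdeal (𝓞 K)⁰ K) = prinFrac K a},
        ∀ y ∈ {u : (FractionalIdeal (𝓞 K)⁰ K)ˣ | ∃ a : 𝓞 K, a ≠ 0 ∧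
          IsCoprime (Ideal.span {a}) f ∧
          (∃ n : ℤ, Int.gcd n N = 1 ∧ a - (n : 𝓞 K) ∈ f) ∧
          (u : FractionalIdeal (𝓞 K)⁰ K) = prinFrac K a},
        x * y ∈ {u : (FractionalIdeal (𝓞 K)⁰ K)ˣ | ∃ a : 𝓞 K, a ≠ 0 ∧
          IsCoprime (Ideal.span {a}) f ∧
          (∃ n : ℤ, Int.gcd n N = 1 ∧ a - (n : 𝓞 K) ∈ f) ∧
          (u : FractionalIdeal (𝓞 K)⁰ K) = prinFrac K a} := by
      rintro x ⟨a, ha0, hca, ⟨n, hn, han⟩, hva⟩ y ⟨b, hb0, hcb, ⟨m, hm, hbm⟩, hvb⟩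
      refine ⟨a * b, mul_ne_zero ha0 hb0, ?_, ⟨n * m, ?_, ?_⟩,
        by rw [Units.val_mul, hva, hvb, RCF.prinFrac_mul]⟩
      · rw [← Ideal.span_singleton_mul_span_singleton]
        exact IsCoprime.mul_left hca hcb
      · exact Int.isCoprime_iff_gcd_eq_one.mp
          (((Int.isCoprime_iff_gcd_eq_one.mpr hn)).mul_left
            (Int.isCoprime_iff_gcd_eq_one.mpr hm))
      · have h5 := f.add_mem (f.mul_mem_left a hbm) (f.mul_mem_left ((m : 𝓞 K)) han)
        rwa [show a * (b - (m : 𝓞 K)) + (m : 𝓞 K) * (a - (n : 𝓞 K))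
          = a * b - ((n * m : ℤ) : 𝓞 K) by push_cast; ring] at h5
    -- class of a PKZ generator lies in the range of ψ
    have hgenclass : ∀ (w : (FractionalIdeal (𝓞 K)⁰ K)ˣ) (α : 𝓞 K) (n : ℤ),
        IsCoprime (Ideal.span {α}) f → Int.gcd n N = 1 → α - (n : 𝓞 K) ∈ f →
        (w : FractionalIdeal (𝓞 K)⁰ K) = prinFrac K α →
        ∃ tg : (ZMod N)ˣ, ∀ hwIK : w ∈ IK K f,
          ψ tg = QuotientGroup.mk (⟨w, hwIK⟩ : IK K f) := by
      intro w α n hcα hgcd hcong hvw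
      have hUn : IsUnit ((n : ℤ) : ZMod N) := by
        have h1 : IsCoprime (n : ℤ) (N : ℤ) := Int.isCoprime_iff_gcd_eq_one.mpr hgcd
        have h2 := h1.map (Int.castRingHom (ZMod N))
        simp only [Int.coe_castRingHom, map_intCast] at h2
        have h3 : (((N : ℤ) : ZMod N)) = 0 := by push_cast; exact ZMod.natCast_self N
        rw [h3, isCoprime_zero_right] at h2
        exact h2
      refine ⟨hUn.unit, ?_⟩
      intro hwIK
      rw [hψ]
      have hd : (N : ℤ) ∣ (((hUn.unit : ZMod N).val : ℤ) - n) := by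
        have h1 : ((((hUn.unit : ZMod N).val : ℤ)) : ZMod N) = ((n : ℤ) : ZMod N) := by
          rw [Int.cast_natCast, ZMod.natCast_val, ZMod.cast_id]
          exact hUn.unit_spec
        have h2 := (ZMod.intCast_eq_intCast_iff _ _ _).mp h1
        exact Int.ModEq.dvd h2.symm
      have hm : (((hUn.unit : ZMod N).val : 𝓞 K)) - α ∈ f := by
        have h6 : (((hUn.unit : ZMod N).val : 𝓞 K)) - ((n : ℤ) : 𝓞 K) ∈ f := by
          have h7 := hsub _ _ hd
          push_cast at h7 ⊢
          exact h7
        have h5 := f.add_mem h6 (f.neg_mem hcong)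
        rwa [show ((((hUn.unit : ZMod N).val : 𝓞 K)) - ((n : ℤ) : 𝓞 K))
          + -(α - ((n : ℤ) : 𝓞 K)) = (((hUn.unit : ZMod N).val : 𝓞 K)) - α by ring] at h5
      exact RCF.class_eq_of_cong hftop hcα hm (RCF.pUnit_val _ _) hvw _ _
    apply le_antisymm
    · rintro q ⟨x, rfl⟩
      obtain ⟨t, rfl⟩ := QuotientGroup.mk_surjective x
      rw [QuotientGroup.lift_mk', hψ]
      refine ⟨⟨RCF.pUnit _ (hvalne t), hUIK t⟩, ?_, rfl⟩
      rw [SetLike.mem_coe, Subgroup.mem_subgroupOf]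
      exact Subgroup.subset_closure ⟨(((t : ZMod N).val : 𝓞 K)), hvalne t, hvalcop t,
        ⟨((t : ZMod N).val : ℤ), by rw [Int.gcd_natCast_natCast]; exact hvalco t,
          by push_cast; simp⟩, RCF.pUnit_val _ (hvalne t)⟩
    · rintro q hq
      obtain ⟨⟨v, hvIK⟩, hvPKZ, rfl⟩ := hq
      rw [SetLike.mem_coe, Subgroup.mem_subgroupOf] at hvPKZ
      unfold PKZ at hvPKZ
      obtain ⟨g, hgS, h, hhS, hveq⟩ := RCF.mem_closure_structure h1SZ hmulSZ hvPKZ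
      obtain ⟨α, hα0, hcα, ⟨n, hn, han⟩, hvg⟩ := hgS
      obtain ⟨β, hβ0, hcβ, ⟨m, hmz, hbm⟩, hvh⟩ := hhS
      have hgIK : g ∈ IK K f := RCF.mem_IK hcα hvg
      have hhIK : h ∈ IK K f := RCF.mem_IK hcβ hvh
      obtain ⟨tg, htg⟩ := hgenclass g α n hcα hn han hvg
      obtain ⟨th, hth⟩ := hgenclass h β m hcβ hmz hbm hvh
      refine ⟨QuotientGroup.mk tg * (QuotientGroup.mk th)⁻¹, ?_⟩
      rw [map_mul, map_inv, QuotientGroup.lift_mk', QuotientGroup.lift_mk',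
        htg hgIK, hth hhIK]
      have hsplit : (⟨v, hvIK⟩ : IK K f) = ⟨g, hgIK⟩ * (⟨h, hhIK⟩)⁻¹ :=
        Subtype.ext hveq
      show _ = QuotientGroup.mk (⟨v, hvIK⟩ : IK K f)
      rw [hsplit]
      rfl
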